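/- Let n ≥ 2 and let 𝔮, q1 be invertible elements of a commutative ring. Define t_λ := 𝔮^{#{s∈λ : h_λ(s) ≡ 0 (mod n)}} · ∏_{(i,j)∈λ, j ≡ 0 (mod n)} (−𝔮 q1^{j}). If λ + 1_k is a Young diagram and ℓ ≡ k − λ_k − 1 (mod n), then t_{λ+1_k} = t_λ · (−𝔮 q1^{λ_k+1})^{e} · ∏_{1≤s≤ℓ(λ), s−λ_s ≡ ℓ (mod n)} 𝔮^{−1} · ∏_{1≤s≤ℓ(λ)+1, s≠k, s−λ_s ≡ ℓ+1 (mod n)} 𝔮, where e = 1 if λ_k + 1 ≡ 0 (mod n) and e = 0 otherwise. -/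

import Mathlib

open Finset

/-- Arm length of the (0-based) box `c`. -/
def armZ (μ : YoungDiagram) (c : ℕ × ℕ) : ℤ := (μ.rowLen c.1 : ℤ) - c.2 - 1

/-- Leg length of the (0-based) box `c`. -/
def legZ (μ : YoungDiagram) (c : ℕ × ℕ) : ℤ := (μ.colLen c.2 : ℤ) - c.1 - 1

/-- Hook length `h_λ(s) = a_λ(s) + ℓ_λ(s) + 1`. -/
def hookZ (μ : YoungDiagram) (c : ℕ × ℕ) : ℤ := armZ μ c + legZ μ c + 1

/-- The monomial prefactor of the intertwiner:
`t_λ = 𝔮^{#{s∈λ : h_λ(s)≡0 (mod n)}} ∏_{(i,j)∈λ, j≡0 (mod n)} (-𝔮 q1^j)`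
(boxes are 1-based, so a 0-based cell `c` has column index `j = c.2 + 1`). -/
def tfac {R : Type*} [CommRing R] (n : ℕ) (qq q1 : Rˣ) (lam : YoungDiagram) : Rˣ :=
  qq ^ (lam.cells.filter (fun c => ((hookZ lam c : ZMod n) = 0))).card *
  ∏ c ∈ lam.cells.filter (fun (c : ℕ × ℕ) => ((c.2 + 1 : ℕ) : ZMod n) = 0),
    (-(qq * q1 ^ (c.2 + 1)))

section Helpers
variable {α : Type*}

lemma card_filter_split (s : Finset α) (P Q₁ Q₂ : α → Prop)
    [DecidablePred P] [DecidablePred Q₁] [DecidablePred Q₂] :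
    (s.filter P).card
      = (s.filter fun c => P c ∧ Q₁ c).card
        + (s.filter fun c => P c ∧ ¬ Q₁ c ∧ Q₂ c).card
        + (s.filter fun c => P c ∧ ¬ Q₁ c ∧ ¬ Q₂ c).card := by
  classical
  have h1 := Finset.card_filter_add_card_filter_not (s := s.filter P) Q₁
  have h2 := Finset.card_filter_add_card_filter_not
      (s := (s.filter P).filter fun c => ¬ Q₁ c) Q₂
  simp only [Finset.filter_filter, and_assoc] at h1 h2
  omega

lemma filter_Ico_succ_left (a b : ℕ) (p : ℕ → Prop) [DecidablePred p] (hpa : ¬ p a) :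
    (Finset.Ico a b).filter p = (Finset.Ico (a+1) b).filter p := by
  ext x
  simp only [mem_filter, mem_Ico]
  constructor
  · rintro ⟨⟨h1, h2⟩, hp⟩
    have hxa : x ≠ a := fun h => hpa (h ▸ hp)
    exact ⟨⟨by omega, h2⟩, hp⟩
  · rintro ⟨⟨h1, h2⟩, hp⟩
    exact ⟨⟨by omega, h2⟩, hp⟩

lemma card_filter_insert [DecidableEq α] (s : Finset α) (x : α) (hx : x ∉ s)
    (p : α → Prop) [DecidablePred p] :
    ((insert x s).filter p).card = (s.filter p).card + (if p x then 1 else 0) := by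
  rw [Finset.filter_insert]
  split
  · rw [Finset.card_insert_of_notMem (fun h => hx (Finset.mem_of_mem_filter _ h))]
  · simp

lemma card_filter_Ico_succ_right (a b : ℕ) (hab : a ≤ b) (p : ℕ → Prop) [DecidablePred p] :
    ((Finset.Ico a (b+1)).filter p).card
      = ((Finset.Ico a b).filter p).card + (if p b then 1 else 0) := by
  have h : Finset.Ico a (b+1) = insert b (Finset.Ico a b) := by
    ext x; simp only [mem_insert, mem_Ico]; omega
  rw [h, card_filter_insert _ _ (by simp) p]

lemma card_Icc_filter_residue (n : ℕ) (a b : ℤ) (hab : a ≤ b + 1) (r : ZMod n) :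
    ((Finset.Icc a b).filter fun x : ℤ => ((x : ZMod n) = r - 1)).card
        + (if ((a : ZMod n) = r) then 1 else 0)
      = ((Finset.Icc a b).filter fun x : ℤ => ((x : ZMod n) = r)).card
        + (if (((b+1 : ℤ) : ZMod n) = r) then 1 else 0) := by
  have hshift : ((Finset.Icc a b).filter fun x : ℤ => ((x : ZMod n) = r - 1)).card
      = ((Finset.Icc (a+1) (b+1)).filter fun x : ℤ => ((x : ZMod n) = r)).card := by
    apply Finset.card_nbij' (i := fun x => x + 1) (j := fun x => x - 1)
    · intro x hx
      simp only [Finset.mem_coe, mem_filter, mem_Icc] at hx ⊢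
      obtain ⟨⟨h1, h2⟩, hp⟩ := hx
      refine ⟨⟨by omega, by omega⟩, ?_⟩
      push_cast
      rw [hp]; ring
    · intro x hx
      simp only [Finset.mem_coe, mem_filter, mem_Icc] at hx ⊢
      obtain ⟨⟨h1, h2⟩, hp⟩ := hx
      refine ⟨⟨by omega, by omega⟩, ?_⟩
      push_cast
      rw [hp]
    · intro x _; dsimp only; omega
    · intro x _; dsimp only; omega
  have hins1 : Finset.Icc a (b+1) = insert a (Finset.Icc (a+1) (b+1)) := by
    ext x; simp only [mem_insert, mem_Icc]; omega
  have hins2 : Finset.Icc a (b+1) = insert (b+1) (Finset.Icc a b) := by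
    ext x; simp only [mem_insert, mem_Icc]; omega
  have h1 := card_filter_insert (Finset.Icc (a+1) (b+1)) a (by simp [mem_Icc])
      (fun x : ℤ => ((x : ZMod n) = r))
  have h2 := card_filter_insert (Finset.Icc a b) (b+1) (by simp [mem_Icc])
      (fun x : ℤ => ((x : ZMod n) = r))
  rw [← hins1] at h1
  rw [← hins2] at h2
  omega

end Helpers


lemma staircase_count (μ : YoungDiagram) (k m L : ℕ)
    (hm : μ.rowLen k = m) (hL : μ.colLen 0 = L) (hcolm : μ.colLen m = k)
    (p : ℤ → Prop) [DecidablePred p] :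
    ((Finset.Ico (k+1) (L+1)).filter fun s => p ((μ.rowLen s : ℤ) - s)).card
      + ((Finset.range m).filter fun j : ℕ => p ((j : ℤ) - μ.colLen j + 1)).card
    = ((Finset.Icc (-(L:ℤ)) ((m:ℤ) - 1 - k)).filter p).card := by
  have hkL : k ≤ L := by rw [← hL, ← hcolm]; exact μ.colLen_anti 0 m (Nat.zero_le m)
  set f1 : ℕ → ℤ := fun s => (μ.rowLen s : ℤ) - s with hf1
  set f2 : ℕ → ℤ := fun j => (j : ℤ) - μ.colLen j + 1 with hf2
  have hrow_le : ∀ s, k ≤ s → μ.rowLen s ≤ m := fun s hs => hm ▸ μ.rowLen_anti k s hs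
  have hmem1 : ∀ s ∈ Finset.Ico (k+1) (L+1), f1 s ∈ Finset.Icc (-(L:ℤ)) ((m:ℤ)-1-k) := by
    intro s hs
    simp only [Finset.mem_Ico] at hs
    have h1 : μ.rowLen s ≤ m := hrow_le s (by omega)
    simp only [Finset.mem_Icc, hf1]
    constructor <;> push_cast <;> omega
  have hmem2 : ∀ j ∈ Finset.range m, f2 j ∈ Finset.Icc (-(L:ℤ)) ((m:ℤ)-1-k) := by
    intro j hj
    simp only [Finset.mem_range] at hj
    have h1 : k < μ.colLen j := by
      rw [← YoungDiagram.mem_iff_lt_colLen, YoungDiagram.mem_iff_lt_rowLen]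
      omega
    have h2 : μ.colLen j ≤ L := hL ▸ μ.colLen_anti 0 j (Nat.zero_le j)
    simp only [Finset.mem_Icc, hf2]
    constructor <;> push_cast <;> omega
  have hinj1 : Set.InjOn f1 (Finset.Ico (k+1) (L+1) : Set ℕ) := by
    intro x _ y _ hxy
    by_contra hne
    rcases Nat.lt_or_ge x y with h | h
    · have := μ.rowLen_anti x y h.le
      simp only [hf1] at hxy; omega
    · have hyx : y < x := by omega
      have := μ.rowLen_anti y x hyx.le
      simp only [hf1] at hxy; omega
  have hinj2 : Set.InjOn f2 (Finset.range m : Set ℕ) := by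
    intro x _ y _ hxy
    by_contra hne
    rcases Nat.lt_or_ge x y with h | h
    · have := μ.colLen_anti x y h.le
      simp only [hf2] at hxy; omega
    · have hyx : y < x := by omega
      have := μ.colLen_anti y x hyx.le
      simp only [hf2] at hxy; omega
  have hdisj : Disjoint ((Finset.Ico (k+1) (L+1)).image f1) ((Finset.range m).image f2) := by
    rw [Finset.disjoint_left]
    rintro x hx1 hx2
    simp only [Finset.mem_image, Finset.mem_Ico, Finset.mem_range] at hx1 hx2
    obtain ⟨s, _, rfl⟩ := hx1
    obtain ⟨j, _, heq⟩ := hx2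
    by_cases hmem : (s, j) ∈ μ
    · have h1 := YoungDiagram.mem_iff_lt_rowLen.1 hmem
      have h2 := YoungDiagram.mem_iff_lt_colLen.1 hmem
      simp only [hf1, hf2] at heq; omega
    · have h1 : μ.rowLen s ≤ j := by
        rw [YoungDiagram.mem_iff_lt_rowLen] at hmem; omega
      have h2 : μ.colLen j ≤ s := by
        rw [YoungDiagram.mem_iff_lt_colLen] at hmem; omega
      simp only [hf1, hf2] at heq; omega
  have hunion : (Finset.Ico (k+1) (L+1)).image f1 ∪ (Finset.range m).image f2
      = Finset.Icc (-(L:ℤ)) ((m:ℤ)-1-k) := by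
    apply Finset.eq_of_subset_of_card_le
    · intro x hx
      rcases Finset.mem_union.1 hx with h | h
      · obtain ⟨s, hs, rfl⟩ := Finset.mem_image.1 h; exact hmem1 s hs
      · obtain ⟨j, hj, rfl⟩ := Finset.mem_image.1 h; exact hmem2 j hj
    · rw [Finset.card_union_of_disjoint hdisj, Finset.card_image_of_injOn hinj1,
        Finset.card_image_of_injOn hinj2, Nat.card_Ico, Finset.card_range, Int.card_Icc]
      omega
  have e1 : ((Finset.Ico (k+1) (L+1)).filter fun s => p (f1 s)).card
      = (((Finset.Ico (k+1) (L+1)).image f1).filter p).card := by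
    rw [Finset.filter_image, Finset.card_image_of_injOn
      (hinj1.mono (fun x hx => Finset.mem_coe.2 (Finset.mem_of_mem_filter _ (Finset.mem_coe.1 hx))))]
  have e2 : ((Finset.range m).filter fun j => p (f2 j)).card
      = (((Finset.range m).image f2).filter p).card := by
    rw [Finset.filter_image, Finset.card_image_of_injOn
      (hinj2.mono (fun x hx => Finset.mem_coe.2 (Finset.mem_of_mem_filter _ (Finset.mem_coe.1 hx))))]
  rw [e1, e2, ← hunion, Finset.filter_union,
    Finset.card_union_of_disjoint (Finset.disjoint_filter_filter hdisj)]


lemma units_pow_shuffle {R : Type*} [CommRing R] (qq P I : Rˣ) (a b c d : ℕ)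
    (h : a + c = b + d) :
    qq ^ a * (P * I) = qq ^ b * P * I * (qq ^ c)⁻¹ * qq ^ d := by
  have key : qq ^ a = qq ^ b * qq ^ d * (qq ^ c)⁻¹ := by
    have h2 : qq ^ a * qq ^ c = qq ^ b * qq ^ d := by
      rw [← pow_add, ← pow_add, h]
    rw [← h2, mul_inv_cancel_right]
  rw [key]
  refine Units.ext ?_
  simp only [Units.val_mul]
  ring

/-- Recursion for `t_λ` when a box of color `ℓ` is added in row `k` (0-based; the
1-based row index is `k+1`):
`t_{λ+1_k} = t_λ (-𝔮 q1^{λ_k+1})^e ∏_{1≤s≤ℓ(λ), s-λ_s≡ℓ} 𝔮⁻¹ ∏_{1≤s≤ℓ(λ)+1, s≠k, s-λ_s≡ℓ+1} 𝔮`,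
where `e = 1` iff `λ_k + 1 ≡ 0 (mod n)`. -/
theorem tfac_recursion {R : Type*} [CommRing R] (n : ℕ) (hn : 2 ≤ n)
    (qq q1 : Rˣ) (lam lam' : YoungDiagram) (k : ℕ) (ℓ : ℤ)
    (hadd : lam'.cells = insert (k, lam.rowLen k) lam.cells)
    (hcol : (ℓ : ZMod n) = (((k : ℤ) + 1 - (lam.rowLen k : ℤ) - 1 : ℤ) : ZMod n)) :
    tfac n qq q1 lam'
    = tfac n qq q1 lam *
      (if ((lam.rowLen k + 1 : ℕ) : ZMod n) = 0 then -(qq * q1 ^ (lam.rowLen k + 1)) else 1) *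
      (∏ s ∈ (Finset.range (lam.colLen 0)).filter
          (fun (s : ℕ) => ((((s : ℤ) + 1 - (lam.rowLen s : ℤ) : ℤ) : ZMod n) = (ℓ : ZMod n))),
        qq⁻¹) *
      (∏ s ∈ (Finset.range (lam.colLen 0 + 1)).filter
          (fun (s : ℕ) => s ≠ k ∧
            ((((s : ℤ) + 1 - (lam.rowLen s : ℤ) : ℤ) : ZMod n) = (ℓ : ZMod n) + 1)),
        qq) := by
  
  classical
  haveI : Fact (1 < n) := ⟨hn⟩
  have hone : (1 : ZMod n) ≠ 0 := one_ne_zero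
  set m := lam.rowLen k with hm
  set L := lam.colLen 0 with hLdef
  set ζ : ZMod n := ((ℓ : ℤ) : ZMod n) with hzeta
  have hz : ζ = ((k : ZMod n)) - ((m : ℕ) : ZMod n) := by
    rw [hcol]; push_cast; ring
  -- structural facts
  have hknot : (k, m) ∉ lam := by
    rw [YoungDiagram.mem_iff_lt_rowLen, ← hm]; omega
  have hmem' : ∀ c : ℕ × ℕ, c ∈ lam' ↔ c = (k, m) ∨ c ∈ lam := by
    intro c
    rw [← YoungDiagram.mem_cells, hadd, Finset.mem_insert, YoungDiagram.mem_cells]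
  have hkm_mem : (k, m) ∈ lam' := (hmem' _).2 (Or.inl rfl)
  have hrowLen' : ∀ i, lam'.rowLen i = if i = k then m + 1 else lam.rowLen i := by
    intro i
    have key : ∀ j : ℕ, j < lam'.rowLen i ↔ ((i, j) = (k, m) ∨ (i, j) ∈ lam) := fun j => by
      rw [← YoungDiagram.mem_iff_lt_rowLen, hmem']
    rcases eq_or_ne i k with rfl | hik
    · rw [if_pos rfl]
      have key' : ∀ j : ℕ, j < lam'.rowLen i ↔ j < m + 1 := by
        intro j
        rw [key j]
        simp only [Prod.mk.injEq, true_and, YoungDiagram.mem_iff_lt_rowLen, ← hm]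
        omega
      have h1 := key' (lam'.rowLen i)
      have h2 := key' (m+1)
      omega
    · rw [if_neg hik]
      have key' : ∀ j : ℕ, j < lam'.rowLen i ↔ j < lam.rowLen i := by
        intro j
        rw [key j, YoungDiagram.mem_iff_lt_rowLen]
        constructor
        · rintro (h | h)
          · exact absurd (congrArg Prod.fst h) hik
          · exact h
        · exact Or.inr
      have h1 := key' (lam'.rowLen i)
      have h2 := key' (lam.rowLen i)
      omega
  have hcolm : lam.colLen m = k := by
    have hub : ¬ (k < lam.colLen m) := by
      rw [← YoungDiagram.mem_iff_lt_colLen]; exact hknot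
    rcases Nat.eq_zero_or_pos k with hk0 | hkpos
    · omega
    · have hmem : (k - 1, m) ∈ lam' := lam'.up_left_mem (by omega) le_rfl hkm_mem
      rcases (hmem' _).1 hmem with h | h
      · exact absurd (congrArg Prod.fst h) (by simp; omega)
      · have := YoungDiagram.mem_iff_lt_colLen.1 h; omega
  have hcolLen' : ∀ j, lam'.colLen j = if j = m then k + 1 else lam.colLen j := by
    intro j
    have key : ∀ i : ℕ, i < lam'.colLen j ↔ ((i, j) = (k, m) ∨ (i, j) ∈ lam) := fun i => by
      rw [← YoungDiagram.mem_iff_lt_colLen, hmem']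
    rcases eq_or_ne j m with hjm | hjm
    · subst hjm
      rw [if_pos rfl]
      have key' : ∀ i : ℕ, i < lam'.colLen m ↔ i < k + 1 := by
        intro i
        rw [key i]
        simp only [Prod.mk.injEq, and_true, YoungDiagram.mem_iff_lt_colLen, hcolm]
        omega
      have h1 := key' (lam'.colLen m)
      have h2 := key' (k+1)
      omega
    · rw [if_neg hjm]
      have key' : ∀ i : ℕ, i < lam'.colLen j ↔ i < lam.colLen j := by
        intro i
        rw [key i, YoungDiagram.mem_iff_lt_colLen]
        constructor
        · rintro (h | h)
          · exact absurd (congrArg Prod.snd h) hjm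
          · exact h
        · exact Or.inr
      have h1 := key' (lam'.colLen j)
      have h2 := key' (lam.colLen j)
      omega
  have hkL : k ≤ L := by rw [hLdef, ← hcolm]; exact lam.colLen_anti 0 m (Nat.zero_le m)
  have hrowL : lam.rowLen L = 0 := by
    have : ¬ ((L, 0) ∈ lam) := by
      rw [YoungDiagram.mem_iff_lt_colLen, ← hLdef]; omega
    rw [YoungDiagram.mem_iff_lt_rowLen] at this; omega
  have hmz : ((m : ℕ) : ZMod n) = ((lam.rowLen k : ℕ) : ZMod n) := by rw [hm]
  -- hook values
  have hookrow' : ∀ j : ℕ, j < m → hookZ lam' (k, j) = (m : ℤ) - j + lam.colLen j - k := by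
    intro j hj
    simp only [hookZ, armZ, legZ]
    rw [hrowLen' k, hcolLen' j, if_pos rfl, if_neg (by omega)]
    push_cast; ring
  have hookrow : ∀ j : ℕ, j < m → hookZ lam (k, j) = (m : ℤ) - j + lam.colLen j - k - 1 := by
    intro j hj
    simp only [hookZ, armZ, legZ]
    rw [← hm]
    push_cast; ring
  have hookcol' : ∀ i : ℕ, i < k → hookZ lam' (i, m) = (lam.rowLen i : ℤ) - m + k - i := by
    intro i hi
    simp only [hookZ, armZ, legZ]
    rw [hrowLen' i, hcolLen' m, if_neg (by omega), if_pos rfl]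
    push_cast; ring
  have hookcol : ∀ i : ℕ, i < k → hookZ lam (i, m) = (lam.rowLen i : ℤ) - m + k - i - 1 := by
    intro i hi
    simp only [hookZ, armZ, legZ]
    rw [hcolm]
    push_cast; ring
  have hookeq : ∀ c : ℕ × ℕ, ¬ c.1 = k → ¬ c.2 = m → hookZ lam' c = hookZ lam c := by
    intro c h1 h2
    simp only [hookZ, armZ, legZ, hrowLen' c.1, hcolLen' c.2, if_neg h1, if_neg h2]
  -- generic bijections
  have rowcard : ∀ (T : ℕ × ℕ → Prop) (U : ℕ → Prop) (_ : DecidablePred T) (_ : DecidablePred U),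
      (∀ j : ℕ, j < m → (T (k, j) ↔ U j)) →
      (lam.cells.filter fun c => T c ∧ c.1 = k).card = ((Finset.range m).filter U).card := by
    intro T U _ _ hTU
    apply Finset.card_nbij' (i := fun c => c.2) (j := fun j => (k, j))
    · rintro ⟨i, j⟩ hc
      simp only [Finset.mem_coe, Finset.mem_filter, YoungDiagram.mem_cells] at hc
      obtain ⟨hcell, hT, hik⟩ := hc
      dsimp only at hT hik ⊢
      rw [hik] at hcell hT
      have hjm : j < m := by
        have := YoungDiagram.mem_iff_lt_rowLen.1 hcell
        omega
      simp only [Finset.mem_coe, Finset.mem_filter, Finset.mem_range]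
      exact ⟨hjm, (hTU j hjm).1 hT⟩
    · intro j hj
      simp only [Finset.mem_coe, Finset.mem_filter, Finset.mem_range] at hj
      obtain ⟨hjm, hU⟩ := hj
      simp only [Finset.mem_coe, Finset.mem_filter, YoungDiagram.mem_cells]
      refine ⟨?_, (hTU j hjm).2 hU, trivial⟩
      rw [YoungDiagram.mem_iff_lt_rowLen, ← hm]; exact hjm
    · rintro ⟨i, j⟩ hc
      simp only [Finset.mem_coe, Finset.mem_filter] at hc
      obtain ⟨_, _, hik⟩ := hc
      dsimp only at hik ⊢
      rw [hik]
    · intro j _; rfl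
  have colcard : ∀ (T : ℕ × ℕ → Prop) (U : ℕ → Prop) (_ : DecidablePred T) (_ : DecidablePred U),
      (∀ i : ℕ, i < k → (T (i, m) ↔ U i)) →
      (lam.cells.filter fun c => T c ∧ ¬ c.1 = k ∧ c.2 = m).card
        = ((Finset.range k).filter U).card := by
    intro T U _ _ hTU
    apply Finset.card_nbij' (i := fun c => c.1) (j := fun i => (i, m))
    · rintro ⟨i, j⟩ hc
      simp only [Finset.mem_coe, Finset.mem_filter, YoungDiagram.mem_cells] at hc
      obtain ⟨hcell, hT, hik, hjm⟩ := hc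
      dsimp only at hT hik hjm ⊢
      rw [hjm] at hcell hT
      have hik' : i < k := by
        have := YoungDiagram.mem_iff_lt_colLen.1 hcell
        omega
      simp only [Finset.mem_coe, Finset.mem_filter, Finset.mem_range]
      exact ⟨hik', (hTU i hik').1 hT⟩
    · intro i hi
      simp only [Finset.mem_coe, Finset.mem_filter, Finset.mem_range] at hi
      obtain ⟨hik, hU⟩ := hi
      simp only [Finset.mem_coe, Finset.mem_filter, YoungDiagram.mem_cells]
      refine ⟨?_, (hTU i hik).2 hU, by omega, trivial⟩
      rw [YoungDiagram.mem_iff_lt_colLen, hcolm]; exact hik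
    · rintro ⟨i, j⟩ hc
      simp only [Finset.mem_coe, Finset.mem_filter] at hc
      obtain ⟨_, _, _, hjm⟩ := hc
      dsimp only at hjm ⊢
      rw [hjm]
    · intro i _; rfl
  -- the four corner counts
  have hX1 : (lam.cells.filter fun c => ((hookZ lam' c : ZMod n) = 0) ∧ c.1 = k).card
      = ((Finset.range m).filter
          (fun j : ℕ => ((((lam.colLen j : ℤ) - (j : ℤ) : ℤ) : ZMod n) = ζ))).card := by
    apply rowcard _ _ inferInstance inferInstance
    intro j hj
    rw [hookrow' j hj]
    push_cast
    constructor
    · intro h; linear_combination h - hz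
    · intro h; linear_combination h + hz
  have hY1 : (lam.cells.filter fun c => ((hookZ lam c : ZMod n) = 0) ∧ c.1 = k).card
      = ((Finset.range m).filter
          (fun j : ℕ => ((((lam.colLen j : ℤ) - (j : ℤ) : ℤ) : ZMod n) = ζ + 1))).card := by
    apply rowcard _ _ inferInstance inferInstance
    intro j hj
    rw [hookrow j hj]
    push_cast
    constructor
    · intro h; linear_combination h - hz
    · intro h; linear_combination h + hz
  have hX2 : (lam.cells.filter fun c =>
        ((hookZ lam' c : ZMod n) = 0) ∧ ¬ c.1 = k ∧ c.2 = m).card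
      = ((Finset.range k).filter
          (fun s : ℕ => ((((s : ℤ) + 1 - (lam.rowLen s : ℤ) : ℤ) : ZMod n) = ζ + 1))).card := by
    apply colcard _ _ inferInstance inferInstance
    intro i hi
    rw [hookcol' i hi]
    push_cast
    constructor
    · intro h; linear_combination - h - hz
    · intro h; linear_combination - h - hz
  have hY2 : (lam.cells.filter fun c =>
        ((hookZ lam c : ZMod n) = 0) ∧ ¬ c.1 = k ∧ c.2 = m).card
      = ((Finset.range k).filter
          (fun s : ℕ => ((((s : ℤ) + 1 - (lam.rowLen s : ℤ) : ℤ) : ZMod n) = ζ))).card := by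
    apply colcard _ _ inferInstance inferInstance
    intro i hi
    rw [hookcol i hi]
    push_cast
    constructor
    · intro h; linear_combination - h - hz
    · intro h; linear_combination - h - hz
  have hX3 : (lam.cells.filter fun c =>
        ((hookZ lam' c : ZMod n) = 0) ∧ ¬ c.1 = k ∧ ¬ c.2 = m)
      = (lam.cells.filter fun c =>
        ((hookZ lam c : ZMod n) = 0) ∧ ¬ c.1 = k ∧ ¬ c.2 = m) := by
    apply Finset.filter_congr
    intro c _
    constructor
    · rintro ⟨h1, h2, h3⟩
      exact ⟨by rwa [hookeq c h2 h3] at h1, h2, h3⟩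
    · rintro ⟨h1, h2, h3⟩
      exact ⟨by rwa [hookeq c h2 h3], h2, h3⟩
  -- splits of the cells filters
  have hsplit' := card_filter_split lam.cells
      (fun c => ((hookZ lam' c : ZMod n) = 0)) (fun c => c.1 = k) (fun c => c.2 = m)
  have hsplit := card_filter_split lam.cells
      (fun c => ((hookZ lam c : ZMod n) = 0)) (fun c => c.1 = k) (fun c => c.2 = m)
  -- the insert step
  have hnew : ¬ ((hookZ lam' (k, m) : ZMod n) = 0) := by
    have h1v : hookZ lam' (k, m) = 1 := by
      simp only [hookZ, armZ, legZ]
      rw [hrowLen' k, hcolLen' m, if_pos rfl, if_pos rfl]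
      push_cast; ring
    rw [h1v]
    simpa using hone
  have h1 : ((insert (k, m) lam.cells).filter
        (fun c => ((hookZ lam' c : ZMod n) = 0))).card
      = (lam.cells.filter (fun c => ((hookZ lam' c : ZMod n) = 0))).card := by
    rw [Finset.filter_insert, if_neg hnew]
  -- A and B splits
  have hqkfalse : ¬ ((((k : ℤ) + 1 - (lam.rowLen k : ℤ) : ℤ) : ZMod n) = ζ) := by
    intro h; apply hone; push_cast at h
    linear_combination h + hz - hmz
  have hA : ((Finset.range L).filter
        (fun s : ℕ => ((((s : ℤ) + 1 - (lam.rowLen s : ℤ) : ℤ) : ZMod n) = ζ))).card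
      = ((Finset.range k).filter
          (fun s : ℕ => ((((s : ℤ) + 1 - (lam.rowLen s : ℤ) : ℤ) : ZMod n) = ζ))).card
        + ((Finset.Ico (k+1) L).filter
          (fun s : ℕ => ((((s : ℤ) + 1 - (lam.rowLen s : ℤ) : ℤ) : ZMod n) = ζ))).card := by
    rw [Finset.range_eq_Ico, ← Finset.Ico_union_Ico_eq_Ico (Nat.zero_le k) hkL,
      Finset.filter_union, Finset.card_union_of_disjoint
        (Finset.disjoint_filter_filter (Finset.Ico_disjoint_Ico_consecutive 0 k L)),
      ← Finset.range_eq_Ico, filter_Ico_succ_left k L _ hqkfalse]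
  have hB : ((Finset.range (L+1)).filter
        (fun s : ℕ => s ≠ k ∧ ((((s : ℤ) + 1 - (lam.rowLen s : ℤ) : ℤ) : ZMod n) = ζ + 1))).card
      = ((Finset.range k).filter
          (fun s : ℕ => ((((s : ℤ) + 1 - (lam.rowLen s : ℤ) : ℤ) : ZMod n) = ζ + 1))).card
        + ((Finset.Ico (k+1) (L+1)).filter
          (fun s : ℕ => ((((s : ℤ) + 1 - (lam.rowLen s : ℤ) : ℤ) : ZMod n) = ζ + 1))).card := by
    rw [Finset.range_eq_Ico, ← Finset.Ico_union_Ico_eq_Ico (Nat.zero_le k) (by omega : k ≤ L+1),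
      Finset.filter_union, Finset.card_union_of_disjoint
        (Finset.disjoint_filter_filter (Finset.Ico_disjoint_Ico_consecutive 0 k (L+1)))]
    congr 1
    · rw [← Finset.range_eq_Ico]
      apply congrArg Finset.card
      apply Finset.filter_congr
      intro s hs
      simp only [Finset.mem_range] at hs
      exact ⟨fun h => h.2, fun h => ⟨by omega, h⟩⟩
    · rw [filter_Ico_succ_left k (L+1) _ (by simp)]
      apply congrArg Finset.card
      apply Finset.filter_congr
      intro s hs
      simp only [Finset.mem_Ico] at hs
      exact ⟨fun h => h.2, fun h => ⟨by omega, h⟩⟩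
  -- staircase applications
  have stairA : ((Finset.Ico (k+1) (L+1)).filter
        (fun s : ℕ => ((((s : ℤ) + 1 - (lam.rowLen s : ℤ) : ℤ) : ZMod n) = ζ))).card
      + ((Finset.range m).filter
          (fun j : ℕ => ((((lam.colLen j : ℤ) - (j : ℤ) : ℤ) : ZMod n) = ζ))).card
      = ((Finset.Icc (-(L:ℤ)) ((m:ℤ) - 1 - k)).filter
          (fun x : ℤ => ((x : ZMod n) = 1 - ζ))).card := by
    have e1 : (Finset.Ico (k+1) (L+1)).filter
          (fun s : ℕ => ((((s : ℤ) + 1 - (lam.rowLen s : ℤ) : ℤ) : ZMod n) = ζ))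
        = (Finset.Ico (k+1) (L+1)).filter
          (fun s : ℕ => ((((lam.rowLen s : ℤ) - (s : ℤ) : ℤ) : ZMod n) = 1 - ζ)) := by
      apply Finset.filter_congr
      intro s _
      push_cast
      constructor
      · intro h; linear_combination -h
      · intro h; linear_combination -h
    have e2 : (Finset.range m).filter
          (fun j : ℕ => ((((lam.colLen j : ℤ) - (j : ℤ) : ℤ) : ZMod n) = ζ))
        = (Finset.range m).filter
          (fun j : ℕ => ((((j : ℤ) - (lam.colLen j : ℤ) + 1 : ℤ) : ZMod n) = 1 - ζ)) := by
      apply Finset.filter_congr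
      intro j _
      push_cast
      constructor
      · intro h; linear_combination -h
      · intro h; linear_combination -h
    rw [e1, e2]
    exact staircase_count lam k m L hm.symm hLdef.symm hcolm
      (p := fun x : ℤ => ((x : ZMod n) = 1 - ζ))
  have stairB : ((Finset.Ico (k+1) (L+1)).filter
        (fun s : ℕ => ((((s : ℤ) + 1 - (lam.rowLen s : ℤ) : ℤ) : ZMod n) = ζ + 1))).card
      + ((Finset.range m).filter
          (fun j : ℕ => ((((lam.colLen j : ℤ) - (j : ℤ) : ℤ) : ZMod n) = ζ + 1))).card
      = ((Finset.Icc (-(L:ℤ)) ((m:ℤ) - 1 - k)).filter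
          (fun x : ℤ => ((x : ZMod n) = 1 - ζ - 1))).card := by
    have e1 : (Finset.Ico (k+1) (L+1)).filter
          (fun s : ℕ => ((((s : ℤ) + 1 - (lam.rowLen s : ℤ) : ℤ) : ZMod n) = ζ + 1))
        = (Finset.Ico (k+1) (L+1)).filter
          (fun s : ℕ => ((((lam.rowLen s : ℤ) - (s : ℤ) : ℤ) : ZMod n) = 1 - ζ - 1)) := by
      apply Finset.filter_congr
      intro s _
      push_cast
      constructor
      · intro h; linear_combination -h
      · intro h; linear_combination -h
    have e2 : (Finset.range m).filter
          (fun j : ℕ => ((((lam.colLen j : ℤ) - (j : ℤ) : ℤ) : ZMod n) = ζ + 1))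
        = (Finset.range m).filter
          (fun j : ℕ => ((((j : ℤ) - (lam.colLen j : ℤ) + 1 : ℤ) : ZMod n) = 1 - ζ - 1)) := by
      apply Finset.filter_congr
      intro j _
      push_cast
      constructor
      · intro h; linear_combination -h
      · intro h; linear_combination -h
    rw [e1, e2]
    exact staircase_count lam k m L hm.symm hLdef.symm hcolm
      (p := fun x : ℤ => ((x : ZMod n) = 1 - ζ - 1))
  -- interval lemma
  have hint := card_Icc_filter_residue n (-(L:ℤ)) ((m:ℤ) - 1 - k)
      (by push_cast; omega) (1 - ζ)
  have hlast : ¬ (((((m:ℤ) - 1 - k) + 1 : ℤ) : ZMod n) = 1 - ζ) := by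
    intro h; apply hone; push_cast at h
    linear_combination hz - h
  rw [if_neg hlast, add_zero] at hint
  -- peeling the top row off the Ico
  have hcondL_iff : ((((L : ℤ) + 1 - (lam.rowLen L : ℤ) : ℤ) : ZMod n) = ζ)
      ↔ (((-(L:ℤ) : ℤ) : ZMod n) = 1 - ζ) := by
    rw [hrowL]
    push_cast
    constructor
    · intro h; linear_combination -h
    · intro h; linear_combination -h
  have hpeel : ((Finset.Ico (k+1) (L+1)).filter
        (fun s : ℕ => ((((s : ℤ) + 1 - (lam.rowLen s : ℤ) : ℤ) : ZMod n) = ζ))).card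
      = ((Finset.Ico (k+1) L).filter
          (fun s : ℕ => ((((s : ℤ) + 1 - (lam.rowLen s : ℤ) : ℤ) : ZMod n) = ζ))).card
        + (if ((-(L:ℤ) : ℤ) : ZMod n) = 1 - ζ then 1 else 0) := by
    rcases eq_or_lt_of_le hkL with hEq | hlt
    · have hm0 : m = 0 := by rw [hm, hEq, hrowL]
      have hcf : ¬ (((-(L:ℤ) : ℤ) : ZMod n) = 1 - ζ) := by
        intro h; apply hone
        have hm0' : ((m : ℕ) : ZMod n) = 0 := by rw [hm0]; push_cast; rfl
        have hkLc : ((k : ℕ) : ZMod n) = ((L : ℕ) : ZMod n) := by rw [hEq]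
        push_cast at h
        linear_combination - h + hz - hm0' + hkLc
      rw [if_neg hcf, add_zero, ← hEq]
      rw [show Finset.Ico (k+1) (k+1) = (∅ : Finset ℕ) from Finset.Ico_self _,
        show Finset.Ico (k+1) k = (∅ : Finset ℕ) from Finset.Ico_eq_empty (by omega)]
    · have hp := card_filter_Ico_succ_right (k+1) L (by omega)
        (fun s : ℕ => ((((s : ℤ) + 1 - (lam.rowLen s : ℤ) : ℤ) : ZMod n) = ζ))
      rw [hp]
      simp only [hcondL_iff]
  -- restated splits (beta-reduced)
  have hsplitA : (lam.cells.filter (fun c => ((hookZ lam' c : ZMod n) = 0))).card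
      = (lam.cells.filter fun c => ((hookZ lam' c : ZMod n) = 0) ∧ c.1 = k).card
        + (lam.cells.filter fun c => ((hookZ lam' c : ZMod n) = 0) ∧ ¬ c.1 = k ∧ c.2 = m).card
        + (lam.cells.filter fun c => ((hookZ lam' c : ZMod n) = 0) ∧ ¬ c.1 = k ∧ ¬ c.2 = m).card :=
    card_filter_split lam.cells _ _ _
  have hsplitB : (lam.cells.filter (fun c => ((hookZ lam c : ZMod n) = 0))).card
      = (lam.cells.filter fun c => ((hookZ lam c : ZMod n) = 0) ∧ c.1 = k).card
        + (lam.cells.filter fun c => ((hookZ lam c : ZMod n) = 0) ∧ ¬ c.1 = k ∧ c.2 = m).card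
        + (lam.cells.filter fun c => ((hookZ lam c : ZMod n) = 0) ∧ ¬ c.1 = k ∧ ¬ c.2 = m).card :=
    card_filter_split lam.cells _ _ _
  have hX3c := congrArg Finset.card hX3
  have hKEY : ((insert (k, m) lam.cells).filter
        (fun c => ((hookZ lam' c : ZMod n) = 0))).card
      + ((Finset.range L).filter
          (fun s : ℕ => ((((s : ℤ) + 1 - (lam.rowLen s : ℤ) : ℤ) : ZMod n) = ζ))).card
      = (lam.cells.filter (fun c => ((hookZ lam c : ZMod n) = 0))).card
      + ((Finset.range (L+1)).filter
          (fun s : ℕ => s ≠ k ∧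
            ((((s : ℤ) + 1 - (lam.rowLen s : ℤ) : ℤ) : ZMod n) = ζ + 1))).card := by
    by_cases hcnd : (((-(L:ℤ) : ℤ) : ZMod n) = 1 - ζ)
    · rw [if_pos hcnd] at hpeel hint
      omega
    · rw [if_neg hcnd] at hpeel hint
      omega
  -- the column product
  have hprodcol : (∏ c ∈ (insert (k, m) lam.cells).filter
        (fun c : ℕ × ℕ => ((c.2 + 1 : ℕ) : ZMod n) = 0), (-(qq * q1 ^ (c.2 + 1))))
      = (∏ c ∈ lam.cells.filter (fun c : ℕ × ℕ => ((c.2 + 1 : ℕ) : ZMod n) = 0),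
          (-(qq * q1 ^ (c.2 + 1))))
        * (if ((m + 1 : ℕ) : ZMod n) = 0 then -(qq * q1 ^ (m + 1)) else 1) := by
    rw [Finset.filter_insert]
    by_cases hcm : ((m + 1 : ℕ) : ZMod n) = 0
    · rw [if_pos hcm, if_pos hcm,
        Finset.prod_insert (fun hmem => hknot
          ((YoungDiagram.mem_cells _).1 (Finset.mem_of_mem_filter _ hmem)))]
      exact mul_comm _ _
    · rw [if_neg hcm, if_neg hcm, mul_one]
  -- final assembly
  simp only [tfac]
  rw [hadd, hprodcol, Finset.prod_const, Finset.prod_const, inv_pow]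
  exact units_pow_shuffle _ _ _ _ _ _ _ hKEY
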